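/- arXiv:2410.13697 — 5 statements merged into one kernel-verified Lean document; each statement's English description precedes it below -/
import Mathlib

section
/- Let (μ_n) be a growth rate and suppose Φ : ℤ⁺ → L(X) satisfies ‖Φ(n)v‖ ≤ M (μ_{ℓ+n}/μ_ℓ)^{λ} ‖v‖ for all n, with constants M ≥ 1, λ > 0, and base index ℓ. Suppose further that there exist N₀ > 0 and a sequence of indices ℓ = γ(0) < γ(1) < γ(2) < ... with μ_{γ(k+1)} ≥ N₀ μ_{γ(k)}, such that ‖Φ-transition from γ(k) to γ(k+1)‖ contracts by factor e^{−1} in the sense that ‖Φ(γ(k+1)−ℓ)v‖ ≤ e^{−1}‖Φ(γ(k)−ℓ)v‖ for all v in a fixed subspace V and all k. If additionally μ_{γ(k+1)}/μ_{γ(k)} ≤ L₂^{K₀} for constants L₂ > 1 and K₀ ∈ ℕ, then there exist constants D₁ = e·M' and a = 1/(K₀ log L₂) > 0 such that ‖Φ(n)v‖ ≤ D₁ (μ_{ℓ+n}/μ_ℓ)^{−a} ‖v‖ for all n ∈ ℤ⁺ and v ∈ V, where M' is a bound for ‖Φ(m)w‖/‖w‖ over intermediate times. -/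
/-- Abstract contraction-chaining step: if along a sequence of times γ(k) (with γ(0) = ℓ,
bounded μ-growth ratios N₀ ≤ μ(γ(k+1))/μ(γ(k)) and μ(γ(k+1))/μ(γ(k)) ≤ L₂^{K₀})
the cocycle contracts on V by a factor e⁻¹, and M' bounds the growth at intermediate
times, then ‖Φ(n)v‖ ≤ e·M' (μ_{ℓ+n}/μ_ℓ)^{-1/(K₀ log L₂)} ‖v‖ for all n and v ∈ V. -/
theorem stmt7 {X : Type*} [NormedAddCommGroup X] [NormedSpace ℝ X] [CompleteSpace X]
    (μ : ℕ → ℝ) (η : ℝ)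
    (hpos : ∀ n, 0 < μ n)
    (hmono : StrictMono μ)
    (htend : Filter.Tendsto μ Filter.atTop Filter.atTop)
    (hη : 1 ≤ η) (hgrow : ∀ n, μ (n + 1) ≤ η * μ n)
    (V : Submodule ℝ X) (Φ : ℕ → X →L[ℝ] X) (hΦ0 : Φ 0 = 1)
    (M lam M' N₀ L₂ : ℝ) (K₀ ℓ : ℕ)
    (hM : 1 ≤ M) (hlam : 0 < lam) (hM' : 1 ≤ M') (hN₀ : 0 < N₀) (hL₂ : 1 < L₂)
    (hK₀ : 1 ≤ K₀)
    (hbound : ∀ n, ∀ v : X, ‖Φ n v‖ ≤ M * (μ (ℓ + n) / μ ℓ) ^ lam * ‖v‖)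
    (γ : ℕ → ℕ) (hγ0 : γ 0 = ℓ) (hγmono : StrictMono γ)
    (hratlo : ∀ k, N₀ * μ (γ k) ≤ μ (γ (k + 1)))
    (hrathi : ∀ k, μ (γ (k + 1)) ≤ L₂ ^ K₀ * μ (γ k))
    (hcontr : ∀ k, ∀ v ∈ V, ‖Φ (γ (k + 1) - ℓ) v‖ ≤ (Real.exp 1)⁻¹ * ‖Φ (γ k - ℓ) v‖)
    (hinter : ∀ k n, γ k ≤ ℓ + n → ℓ + n < γ (k + 1) →
      ∀ v ∈ V, ‖Φ n v‖ ≤ M' * ‖Φ (γ k - ℓ) v‖) :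
    ∀ n, ∀ v ∈ V,
      ‖Φ n v‖ ≤ Real.exp 1 * M' *
        (μ (ℓ + n) / μ ℓ) ^ (-(1 / ((K₀ : ℝ) * Real.log L₂))) * ‖v‖ := by
  intro n v hv
  -- γ k ≥ ℓ + k
  have hid : ∀ k, ℓ + k ≤ γ k := by
    intro k
    induction k with
    | zero => omega
    | succ k ih =>
      have h2 : γ k < γ (k + 1) := hγmono (by omega)
      omega
  -- find k with γ k ≤ ℓ + n < γ (k+1)
  have hex : ∃ k, γ k ≤ ℓ + n ∧ ℓ + n < γ (k + 1) := by
    have hne : ∃ K, ℓ + n < γ K := ⟨n + 1, by have := hid (n + 1); omega⟩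
    classical
    let K := Nat.find hne
    have hK : ℓ + n < γ K := Nat.find_spec hne
    have hK0 : K ≠ 0 := by
      intro h
      have := hK
      rw [h, hγ0] at this
      omega
    obtain ⟨k, hKk⟩ := Nat.exists_eq_succ_of_ne_zero hK0
    have hk : ¬ ℓ + n < γ k := Nat.find_min hne (by omega)
    rw [hKk] at hK
    exact ⟨k, by omega, hK⟩
  obtain ⟨k, hk1, hk2⟩ := hex
  -- contraction along γ
  have hctr : ∀ j, ∀ w ∈ V, ‖Φ (γ j - ℓ) w‖ ≤ (Real.exp 1)⁻¹ ^ j * ‖w‖ := by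
    intro j
    induction j with
    | zero =>
      intro w hw
      simp [hγ0, hΦ0]
    | succ j ih =>
      intro w hw
      calc ‖Φ (γ (j + 1) - ℓ) w‖ ≤ (Real.exp 1)⁻¹ * ‖Φ (γ j - ℓ) w‖ := hcontr j w hw
        _ ≤ (Real.exp 1)⁻¹ * ((Real.exp 1)⁻¹ ^ j * ‖w‖) := by
            have := ih w hw
            have h0 : (0:ℝ) ≤ (Real.exp 1)⁻¹ := by positivity
            nlinarith
        _ = (Real.exp 1)⁻¹ ^ (j + 1) * ‖w‖ := by ring
  have h1 : ‖Φ n v‖ ≤ M' * ((Real.exp 1)⁻¹ ^ k * ‖v‖) := by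
    calc ‖Φ n v‖ ≤ M' * ‖Φ (γ k - ℓ) v‖ := hinter k n hk1 hk2 v hv
      _ ≤ M' * ((Real.exp 1)⁻¹ ^ k * ‖v‖) := by
          have := hctr k v hv
          nlinarith [norm_nonneg (Φ (γ k - ℓ) v), norm_nonneg v]
  -- growth bound on μ along γ
  have hgro : ∀ j, μ (γ j) ≤ (L₂ ^ K₀) ^ j * μ ℓ := by
    intro j
    induction j with
    | zero => simp [hγ0, le_refl]
    | succ j ih =>
      have hL₂pos : (0:ℝ) < L₂ ^ K₀ := by positivity
      calc μ (γ (j + 1)) ≤ L₂ ^ K₀ * μ (γ j) := hrathi j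
        _ ≤ L₂ ^ K₀ * ((L₂ ^ K₀) ^ j * μ ℓ) := by nlinarith
        _ = (L₂ ^ K₀) ^ (j + 1) * μ ℓ := by ring
  have hμn : μ (ℓ + n) ≤ (L₂ ^ K₀) ^ (k + 1) * μ ℓ :=
    le_trans (hmono.monotone hk2.le) (hgro (k + 1))
  set a : ℝ := 1 / ((K₀ : ℝ) * Real.log L₂) with ha
  have hlog : 0 < Real.log L₂ := Real.log_pos hL₂
  have hK₀' : (0:ℝ) < (K₀ : ℝ) := by
    have : 0 < K₀ := hK₀
    exact_mod_cast this
  have ha_pos : 0 < a := by positivity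
  have hμℓ : 0 < μ ℓ := hpos ℓ
  have hr1 : (1:ℝ) ≤ μ (ℓ + n) / μ ℓ := by
    rw [le_div_iff₀ hμℓ]
    simpa using hmono.monotone (Nat.le_add_right ℓ n)
  have hr2 : μ (ℓ + n) / μ ℓ ≤ (L₂ ^ K₀) ^ (k + 1) := by
    rw [div_le_iff₀ hμℓ]
    exact hμn
  -- lower bound on rpow with negative exponent
  have hrpow : ((L₂ ^ K₀) ^ (k + 1) : ℝ) ^ (-a) ≤ (μ (ℓ + n) / μ ℓ) ^ (-a) :=
    Real.rpow_le_rpow_of_nonpos (by linarith) hr2 (by linarith)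
  have hcalc : ((L₂ ^ K₀) ^ (k + 1) : ℝ) ^ (-a) = Real.exp (-((k:ℝ) + 1)) := by
    rw [Real.rpow_def_of_pos (by positivity)]
    congr 1
    rw [← pow_mul, Real.log_pow, ha]
    push_cast
    field_simp
  have hexp : Real.exp 1 * Real.exp (-((k:ℝ) + 1)) = (Real.exp 1)⁻¹ ^ k := by
    rw [← Real.exp_add, ← Real.exp_neg, ← Real.exp_nat_mul]
    congr 1
    ring
  have key : M' * (Real.exp 1)⁻¹ ^ k ≤ Real.exp 1 * M' * (μ (ℓ + n) / μ ℓ) ^ (-a) := by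
    have h3 : Real.exp (-((k:ℝ) + 1)) ≤ (μ (ℓ + n) / μ ℓ) ^ (-a) := by
      rw [← hcalc]; exact hrpow
    calc M' * (Real.exp 1)⁻¹ ^ k = Real.exp 1 * M' * Real.exp (-((k:ℝ) + 1)) := by
          rw [mul_comm (Real.exp 1) M', mul_assoc, hexp]
      _ ≤ Real.exp 1 * M' * (μ (ℓ + n) / μ ℓ) ^ (-a) := by
          have : (0:ℝ) < Real.exp 1 * M' := by positivity
          nlinarith
  calc ‖Φ n v‖ ≤ M' * ((Real.exp 1)⁻¹ ^ k * ‖v‖) := h1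
    _ = M' * (Real.exp 1)⁻¹ ^ k * ‖v‖ := by ring
    _ ≤ Real.exp 1 * M' * (μ (ℓ + n) / μ ℓ) ^ (-a) * ‖v‖ := by
        exact mul_le_mul_of_nonneg_right key (norm_nonneg v)
    _ = Real.exp 1 * M' * (μ (ℓ + n) / μ ℓ) ^ (-(1 / ((K₀ : ℝ) * Real.log L₂))) * ‖v‖ := by
        rw [ha]
end

section
/- Let (μ_n) be a growth rate with constant η, let λ > 0, M ≥ 1, c > 0, ℓ ∈ ℤ⁺, and let (x_n)_{n≥0} be a sequence of nonnegative reals satisfying x_n ≤ M (μ_{ℓ+n}/μ_ℓ)^{λ} x_0 + M c Σ_{j=0}^{n−1} (μ_{ℓ+n}/μ_{ℓ+j+1})^{λ} φ_{ℓ+j+1}^{−1} x_j, where φ_m = μ_m/(μ_{m+1}−μ_m). Then x_n ≤ M (μ_{ℓ+n}/μ_ℓ)^{λ} exp(M c Σ_{j=ℓ+1}^{ℓ+n} φ_j^{−1}) x_0 ≤ M η^{Mcη} (μ_{ℓ+n}/μ_ℓ)^{λ + Mcη} x_0 for all n ≥ 0. -/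
/-!
Since `μ` is increasing, `(μ_{ℓ+n}/μ_{ℓ+j+1})^λ ≤ (μ_{ℓ+n}/μ_ℓ)^λ / (μ_{ℓ+j}/μ_ℓ)^λ`, so dividing
out the weight `(μ_{ℓ+n}/μ_ℓ)^λ` turns the hypothesis into a discrete Gronwall inequality in
summation form, and `x_n ≤ M (μ_{ℓ+n}/μ_ℓ)^λ exp(M c Σ φ_j⁻¹) x_0`. For the second bound, each
`φ_j⁻¹ = t - 1` with `t = μ_{j+1}/μ_j ∈ [1, η]` is at most `η log t`, so the exponent telescopes to
at most `M c η log(μ_{ℓ+n+1}/μ_{ℓ+1}) ≤ M c η log(η μ_{ℓ+n}/μ_ℓ)`.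
-/

open Finset Real

theorem discrete_gronwall_sum {y a : ℕ → ℝ} {C K : ℝ} (hC : 0 ≤ C) (hK : 0 ≤ K)
    (ha : ∀ j, 0 ≤ a j) (hy : ∀ n, y n ≤ C + K * ∑ j ∈ range n, a j * y j) (n : ℕ) :
    y n ≤ C * exp (K * ∑ j ∈ range n, a j) := by
  -- the right-hand side `u n` of the hypothesis satisfies `u (n + 1) ≤ (1 + K a n) u n`
  set u : ℕ → ℝ := fun n => C + K * ∑ j ∈ range n, a j * y j with hu_def
  have hu : ∀ n ≥ 0, u (n + 1) ≤ (1 + K * a n) * u n + 0 := by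
    intro n _
    have : K * a n * y n ≤ K * a n * u n := by
      gcongr
      · exact mul_nonneg hK (ha n)
      · exact hy n
    simp only [hu_def, sum_range_succ] at this ⊢
    linarith
  calc y n ≤ u n := hy n
    _ ≤ (u 0 + ∑ _ ∈ Ico 0 n, (0 : ℝ)) * exp (∑ i ∈ Ico 0 n, K * a i) :=
        discrete_gronwall (by simpa [hu_def] using hC) hu (fun i _ => mul_nonneg hK (ha i))
          (fun _ _ => le_rfl) n.zero_le
    _ = C * exp (K * ∑ j ∈ range n, a j) := by simp [hu_def, mul_sum]

theorem discrete_gronwall_weighted_sum {x r a : ℕ → ℝ} {w : ℕ → ℕ → ℝ} {C K : ℝ}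
    (hC : 0 ≤ C) (hK : 0 ≤ K) (ha : ∀ j, 0 ≤ a j) (hx_nonneg : ∀ n, 0 ≤ x n) (hr : ∀ n, 0 < r n)
    (hwr : ∀ n j, j < n → w n j * r j ≤ r n)
    (hx : ∀ n, x n ≤ r n * C + K * ∑ j ∈ range n, w n j * a j * x j) (n : ℕ) :
    x n ≤ r n * C * exp (K * ∑ j ∈ range n, a j) := by
  have hy : ∀ n, x n / r n ≤ C + K * ∑ j ∈ range n, a j * (x j / r j) := by
    intro n
    rw [div_le_iff₀ (hr n)]
    calc x n ≤ r n * C + K * ∑ j ∈ range n, w n j * a j * x j := hx n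
      _ ≤ r n * C + K * ∑ j ∈ range n, r n * (a j * (x j / r j)) := by
          gcongr _ + _ * ∑ j ∈ range n, ?_ with j hj
          calc w n j * a j * x j = w n j * r j * (a j * (x j / r j)) := by
                field_simp [(hr j).ne']
            _ ≤ r n * (a j * (x j / r j)) := by
                have := div_nonneg (hx_nonneg j) (hr j).le
                gcongr
                · exact mul_nonneg (ha j) this
                · exact hwr n j (mem_range.1 hj)
      _ = (C + K * ∑ j ∈ range n, a j * (x j / r j)) * r n := by rw [← mul_sum]; ring
  have := discrete_gronwall_sum hC hK ha hy n
  rw [div_le_iff₀ (hr n)] at this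
  linarith

theorem sub_one_le_mul_log {t η : ℝ} (ht : 1 ≤ t) (htη : t ≤ η) : t - 1 ≤ η * log t := by
  have htpos : 0 < t := by linarith
  calc t - 1 = t * (1 - t⁻¹) := by field_simp
    _ ≤ t * log t := by gcongr; exact one_sub_inv_le_log_of_pos htpos
    _ ≤ η * log t := by gcongr; exact log_nonneg ht

theorem div_rpow_mul_div_rpow_le {p q s t lam : ℝ} (hp : 0 ≤ p) (hq : 0 < q) (hs : 0 ≤ s)
    (ht : 0 < t) (hsq : s ≤ q) (hlam : 0 ≤ lam) : (p / q) ^ lam * (s / t) ^ lam ≤ (p / t) ^ lam := by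
  rw [← mul_rpow (by positivity) (by positivity)]
  gcongr
  calc p / q * (s / t) = p / t * (s / q) := by ring
    _ ≤ p / t * 1 := by gcongr; exact (div_le_one hq).2 hsq
    _ = p / t := mul_one _

theorem exp_mul_le_rpow_of_le_mul_log {S K η y : ℝ} (hK : 0 ≤ K) (hy : 0 < y) (hS : S ≤ η * log y) :
    exp (K * S) ≤ y ^ (K * η) := by
  rw [rpow_def_of_pos hy]
  refine exp_le_exp.2 ?_
  calc K * S ≤ K * (η * log y) := by gcongr
    _ = log y * (K * η) := by ring

section GrowthRate

variable {μ : ℕ → ℝ} {η : ℝ}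

theorem growth_sub_div_le_mul_log (hpos : ∀ n, 0 < μ n) (hmono : Monotone μ)
    (hgrow : ∀ n, μ (n + 1) ≤ η * μ n) (j : ℕ) :
    (μ (j + 1) - μ j) / μ j ≤ η * (log (μ (j + 1)) - log (μ j)) := by
  have h := sub_one_le_mul_log ((one_le_div (hpos j)).2 (hmono j.le_succ))
    ((div_le_iff₀ (hpos j)).2 (hgrow j))
  rwa [log_div (hpos _).ne' (hpos _).ne', div_sub_one (hpos j).ne'] at h

theorem sum_Ico_growth_le_mul_log (hpos : ∀ n, 0 < μ n) (hmono : Monotone μ)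
    (hgrow : ∀ n, μ (n + 1) ≤ η * μ n) {m n : ℕ} (hmn : m ≤ n) :
    ∑ j ∈ Ico m n, (μ (j + 1) - μ j) / μ j ≤ η * log (μ n / μ m) := by
  calc ∑ j ∈ Ico m n, (μ (j + 1) - μ j) / μ j
      ≤ ∑ j ∈ Ico m n, η * (log (μ (j + 1)) - log (μ j)) :=
        sum_le_sum fun j _ => growth_sub_div_le_mul_log hpos hmono hgrow j
    _ = η * log (μ n / μ m) := by
        rw [← mul_sum, sum_Ico_sub (fun j => log (μ j)) hmn, log_div (hpos _).ne' (hpos _).ne']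

theorem sum_Icc_growth_le_mul_log (hpos : ∀ n, 0 < μ n) (hmono : Monotone μ) (hη : 0 ≤ η)
    (hgrow : ∀ n, μ (n + 1) ≤ η * μ n) (ℓ n : ℕ) :
    ∑ j ∈ Icc (ℓ + 1) (ℓ + n), (μ (j + 1) - μ j) / μ j ≤ η * log (η * (μ (ℓ + n) / μ ℓ)) := by
  rw [← Ico_add_one_right_eq_Icc]
  refine (sum_Ico_growth_le_mul_log hpos hmono hgrow (by omega)).trans ?_
  gcongr
  · exact div_pos (hpos _) (hpos _)
  · rw [← mul_div_assoc]
    exact div_le_div₀ (mul_nonneg hη (hpos _).le) (hgrow _) (hpos _) (hmono ℓ.le_succ)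

end GrowthRate

theorem stmt8_general (μ : ℕ → ℝ) (η : ℝ)
    (hpos : ∀ n, 0 < μ n)
    (hmono : StrictMono μ)
    (hη : 1 ≤ η) (hgrow : ∀ n, μ (n + 1) ≤ η * μ n)
    (lam M c : ℝ) (hlam : 0 < lam) (hM : 1 ≤ M) (hc : 0 < c) (ℓ : ℕ)
    (x : ℕ → ℝ) (hxnn : ∀ n, 0 ≤ x n)
    (hrec : ∀ n, x n ≤ M * (μ (ℓ + n) / μ ℓ) ^ lam * x 0 +
      M * c * ∑ j ∈ Finset.range n,
        (μ (ℓ + n) / μ (ℓ + j + 1)) ^ lam *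
          ((μ (ℓ + j + 2) - μ (ℓ + j + 1)) / μ (ℓ + j + 1)) * x j) :
    ∀ n, x n ≤ M * (μ (ℓ + n) / μ ℓ) ^ lam *
        Real.exp (M * c * ∑ j ∈ Finset.Icc (ℓ + 1) (ℓ + n), (μ (j + 1) - μ j) / μ j) * x 0 ∧
      M * (μ (ℓ + n) / μ ℓ) ^ lam *
        Real.exp (M * c * ∑ j ∈ Finset.Icc (ℓ + 1) (ℓ + n), (μ (j + 1) - μ j) / μ j) * x 0 ≤
        M * η ^ (M * c * η) * (μ (ℓ + n) / μ ℓ) ^ (lam + M * c * η) * x 0 := by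
  intro n
  have hM₀ : 0 ≤ M := by linarith
  have hK : 0 ≤ M * c := mul_nonneg hM₀ hc.le
  have hρ : ∀ k, 0 < μ (ℓ + k) / μ ℓ := fun k => div_pos (hpos _) (hpos _)
  have hsum : ∑ j ∈ Icc (ℓ + 1) (ℓ + n), (μ (j + 1) - μ j) / μ j =
      ∑ j ∈ range n, (μ (ℓ + j + 2) - μ (ℓ + j + 1)) / μ (ℓ + j + 1) := by
    rw [← Ico_add_one_right_eq_Icc, sum_Ico_eq_sum_range]
    simp only [show ℓ + n + 1 - (ℓ + 1) = n by omega, add_right_comm ℓ 1]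
  have hgronwall := discrete_gronwall_weighted_sum (x := x) (C := M * x 0)
    (a := fun j => (μ (ℓ + j + 2) - μ (ℓ + j + 1)) / μ (ℓ + j + 1))
    (r := fun k => (μ (ℓ + k) / μ ℓ) ^ lam) (w := fun k j => (μ (ℓ + k) / μ (ℓ + j + 1)) ^ lam)
    (mul_nonneg hM₀ (hxnn 0)) hK
    (fun j => div_nonneg (sub_nonneg.2 (hmono.monotone (by omega))) (hpos _).le) hxnn
    (fun k => rpow_pos_of_pos (hρ k) lam)
    (fun k j _ => div_rpow_mul_div_rpow_le (hpos _).le (hpos _) (hpos _).le (hpos _)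
      (hmono.monotone (by omega)) hlam.le)
    (fun k => by linarith [hrec k]) n
  refine ⟨by rw [hsum]; linarith, ?_⟩
  have hexp := exp_mul_le_rpow_of_le_mul_log hK (mul_pos (by linarith) (hρ n))
    (sum_Icc_growth_le_mul_log hpos hmono.monotone (by linarith) hgrow ℓ n)
  calc _ ≤ M * (μ (ℓ + n) / μ ℓ) ^ lam * (η * (μ (ℓ + n) / μ ℓ)) ^ (M * c * η) * x 0 := by
        have := mul_nonneg hM₀ (rpow_pos_of_pos (hρ n) lam).le
        have := hxnn 0
        gcongr
    _ = _ := by rw [mul_rpow (by linarith) (hρ n).le, rpow_add (hρ n)]; ring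

/-- Discrete Gronwall inequality combined with the growth-rate sum estimate:
if x_n ≤ M (μ_{ℓ+n}/μ_ℓ)^λ x_0 + M c Σ_{j=0}^{n-1} (μ_{ℓ+n}/μ_{ℓ+j+1})^λ φ_{ℓ+j+1}⁻¹ x_j,
then x_n ≤ M (μ_{ℓ+n}/μ_ℓ)^λ exp(M c Σ_{j=ℓ+1}^{ℓ+n} φ_j⁻¹) x_0
       ≤ M η^{Mcη} (μ_{ℓ+n}/μ_ℓ)^{λ+Mcη} x_0. -/
theorem stmt8 (μ : ℕ → ℝ) (η : ℝ)
    (hpos : ∀ n, 0 < μ n)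
    (hmono : StrictMono μ)
    (htend : Filter.Tendsto μ Filter.atTop Filter.atTop)
    (hη : 1 ≤ η) (hgrow : ∀ n, μ (n + 1) ≤ η * μ n)
    (lam M c : ℝ) (hlam : 0 < lam) (hM : 1 ≤ M) (hc : 0 < c) (ℓ : ℕ)
    (x : ℕ → ℝ) (hxnn : ∀ n, 0 ≤ x n)
    (hrec : ∀ n, x n ≤ M * (μ (ℓ + n) / μ ℓ) ^ lam * x 0 +
      M * c * ∑ j ∈ Finset.range n,
        (μ (ℓ + n) / μ (ℓ + j + 1)) ^ lam *
          ((μ (ℓ + j + 2) - μ (ℓ + j + 1)) / μ (ℓ + j + 1)) * x j) :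
    ∀ n, x n ≤ M * (μ (ℓ + n) / μ ℓ) ^ lam *
        Real.exp (M * c * ∑ j ∈ Finset.Icc (ℓ + 1) (ℓ + n), (μ (j + 1) - μ j) / μ j) * x 0 ∧
      M * (μ (ℓ + n) / μ ℓ) ^ lam *
        Real.exp (M * c * ∑ j ∈ Finset.Icc (ℓ + 1) (ℓ + n), (μ (j + 1) - μ j) / μ j) * x 0 ≤
        M * η ^ (M * c * η) * (μ (ℓ + n) / μ ℓ) ^ (lam + M * c * η) * x 0 :=
  stmt8_general μ η hpos hmono hη hgrow lam M c hlam hM hc ℓ x hxnn hrec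
end

section
/- Under the deterministic μ-dichotomy hypotheses with constants D ≥ 1, λ > 0 and growth rate constant η, fix ℓ ∈ ℤ⁺ and a bounded sequence (y_n) with sup ‖y_n‖ = Y. Define x_n^{(u)} := −Σ_{j=1}^{∞} φ_{ℓ+n+j}^{−1} Φ(−j, ℓ+n+j) Q_{ℓ+n+j} y_{n+j}, where Φ(−j, m) denotes the inverse of Φ(j, m−j) restricted to ker P_{m−j}, Q_m = Id − P_m, and φ_m = μ_m/(μ_{m+1}−μ_m). Then the series converges absolutely and ‖x_n^{(u)}‖ ≤ D Y η^{λ+1} / λ for all n. -/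
/-!
Each term is at most `D Y (μ_{ℓ+n} / μ_m)^λ (μ_{m+1} - μ_m) / μ_m` with `m = ℓ + n + j + 1`.
Convexity of `t ↦ t^{-λ}`, in the form `λ (x - 1) ≤ x^{λ+1} (1 - x^{-λ})` for `x = μ_{m+1}/μ_m`,
together with `x ≤ η` bounds this by `D Y η^{λ+1} / λ` times the difference of consecutive
values of `(μ_m / μ_{ℓ+n})^{-λ}`, so the series telescopes to at most `D Y η^{λ+1} / λ`.
-/

theorem mul_one_sub_inv_le_rpow_sub_one {x p : ℝ} (hx : 0 < x) (hp : 0 ≤ p) :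
    p * (1 - x⁻¹) ≤ x ^ p - 1 := by
  calc p * (1 - x⁻¹) ≤ p * Real.log x :=
        mul_le_mul_of_nonneg_left (Real.one_sub_inv_le_log_of_pos hx) hp
    _ ≤ Real.exp (Real.log x * p) - 1 := by linarith [Real.add_one_le_exp (Real.log x * p)]
    _ = x ^ p - 1 := by rw [Real.rpow_def_of_pos hx]

theorem mul_sub_one_le_rpow_mul_one_sub_rpow_neg {x η p : ℝ} (hx : 1 ≤ x) (hxη : x ≤ η)
    (hp : 0 ≤ p) : p * (x - 1) ≤ η ^ (p + 1) * (1 - x ^ (-p)) := by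
  have hx0 : 0 < x := by linarith
  calc p * (x - 1) = x * (p * (1 - x⁻¹)) := by field_simp
    _ ≤ x * (x ^ p - 1) := mul_le_mul_of_nonneg_left (mul_one_sub_inv_le_rpow_sub_one hx0 hp) hx0.le
    _ = x ^ (p + 1) * (1 - x ^ (-p)) := by
      rw [Real.rpow_add_one hx0.ne', Real.rpow_neg hx0.le]; field_simp
    _ ≤ η ^ (p + 1) * (1 - x ^ (-p)) :=
      mul_le_mul_of_nonneg_right (Real.rpow_le_rpow hx0.le hxη (by linarith))
        (sub_nonneg.2 (Real.rpow_le_one_of_one_le_of_nonpos hx (by linarith)))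

theorem sub_div_mul_div_rpow_neg_le {a b c η p : ℝ} (ha : 0 < a) (hc : 0 < c) (hab : a ≤ b)
    (hbη : b ≤ η * a) (hp : 0 < p) :
    (b - a) / a * (a / c) ^ (-p) ≤ η ^ (p + 1) / p * ((a / c) ^ (-p) - (b / c) ^ (-p)) := by
  have hx : 1 ≤ b / a := (one_le_div ha).2 hab
  have hxη : b / a ≤ η := (div_le_iff₀ ha).2 hbη
  have hb : b / c = b / a * (a / c) := by field_simp
  have key := mul_sub_one_le_rpow_mul_one_sub_rpow_neg hx hxη hp.le
  rw [hb, Real.mul_rpow (by positivity) (div_pos ha hc).le]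
  calc (b - a) / a * (a / c) ^ (-p) = p * (b / a - 1) * (a / c) ^ (-p) / p := by
        field_simp
    _ ≤ η ^ (p + 1) * (1 - (b / a) ^ (-p)) * (a / c) ^ (-p) / p := by gcongr
    _ = _ := by ring

theorem norm_sub_div_smul_le {X : Type*} [SeminormedAddCommGroup X] [NormedSpace ℝ X]
    {a b c η p C : ℝ} {v : X} (ha : 0 < a) (hc : 0 < c) (hab : a ≤ b) (hbη : b ≤ η * a)
    (hp : 0 < p) (hC : 0 ≤ C) (hv : ‖v‖ ≤ C * (a / c) ^ (-p)) :
    ‖((b - a) / a) • v‖ ≤ C * η ^ (p + 1) / p * ((a / c) ^ (-p) - (b / c) ^ (-p)) := by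
  have hcoef : 0 ≤ (b - a) / a := div_nonneg (sub_nonneg.2 hab) ha.le
  calc ‖((b - a) / a) • v‖ ≤ (b - a) / a * (C * (a / c) ^ (-p)) := by
        rw [norm_smul, Real.norm_of_nonneg hcoef]; gcongr
    _ = C * ((b - a) / a * (a / c) ^ (-p)) := by ring
    _ ≤ C * (η ^ (p + 1) / p * ((a / c) ^ (-p) - (b / c) ^ (-p))) :=
        mul_le_mul_of_nonneg_left (sub_div_mul_div_rpow_neg_le ha hc hab hbη hp) hC
    _ = _ := by ring

theorem summable_and_tsum_le_of_le_sub_succ {g A : ℕ → ℝ} (hg : ∀ j, 0 ≤ g j)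
    (hgA : ∀ j, g j ≤ A j - A (j + 1)) (hA : ∀ j, 0 ≤ A j) :
    Summable g ∧ ∑' j, g j ≤ A 0 := by
  have hsum : ∀ N, ∑ j ∈ Finset.range N, g j ≤ A 0 := fun N =>
    calc ∑ j ∈ Finset.range N, g j ≤ ∑ j ∈ Finset.range N, (A j - A (j + 1)) :=
          Finset.sum_le_sum fun j _ => hgA j
      _ = A 0 - A N := Finset.sum_range_sub' A N
      _ ≤ A 0 := sub_le_self _ (hA N)
  exact ⟨summable_of_sum_range_le hg hsum, Real.tsum_le_of_sum_range_le hg hsum⟩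

theorem stmt17_general {X : Type*} [NormedAddCommGroup X] [NormedSpace ℝ X]
    (μ : ℕ → ℝ) (η : ℝ)
    (hpos : ∀ n, 0 < μ n)
    (hmono : StrictMono μ)
    (hη : 1 ≤ η) (hgrow : ∀ n, μ (n + 1) ≤ η * μ n)
    (P : ℕ → X →L[ℝ] X) (Ψ : ℕ → ℕ → X →L[ℝ] X)
    (D lam : ℝ) (hD : 1 ≤ D) (hlam : 0 < lam)
    (hunstable : ∀ j m (w : X), j ≤ m →
      ‖Ψ j m (((1 : X →L[ℝ] X) - P m) w)‖ ≤ D * (μ m / μ (m - j)) ^ (-lam) * ‖w‖)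
    (ℓ n : ℕ) (y : ℕ → X) (Y : ℝ) (hyb : ∀ k, ‖y k‖ ≤ Y)
    (f : ℕ → X)
    (hf : ∀ j, f j = ((μ (ℓ + n + j + 2) - μ (ℓ + n + j + 1)) / μ (ℓ + n + j + 1)) •
      Ψ (j + 1) (ℓ + n + j + 1)
        (((1 : X →L[ℝ] X) - P (ℓ + n + j + 1)) (y (n + j + 1)))) :
    Summable (fun j : ℕ => ‖f j‖) ∧ ‖-∑' j : ℕ, f j‖ ≤ D * Y * η ^ (lam + 1) / lam := by
  have hD0 : 0 ≤ D := zero_le_one.trans hD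
  have hDY : 0 ≤ D * Y := mul_nonneg hD0 ((norm_nonneg _).trans (hyb 0))
  set R : ℕ → ℝ := fun j => (μ (ℓ + n + j + 1) / μ (ℓ + n)) ^ (-lam)
  have hR : ∀ j, 0 ≤ R j := fun j => Real.rpow_nonneg (div_pos (hpos _) (hpos _)).le _
  set K := D * Y * η ^ (lam + 1) / lam
  have hK : 0 ≤ K := by have := Real.rpow_nonneg (zero_le_one.trans hη) (lam + 1); positivity
  have hterm : ∀ j, ‖f j‖ ≤ K * R j - K * R (j + 1) := by
    intro j
    have hΨ := hunstable (j + 1) (ℓ + n + j + 1) (y (n + j + 1)) (by omega)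
    rw [show ℓ + n + j + 1 - (j + 1) = ℓ + n by omega] at hΨ
    rw [hf, ← mul_sub]
    refine norm_sub_div_smul_le (hpos _) (hpos _) (hmono (by omega)).le (hgrow _) hlam hDY ?_
    exact hΨ.trans (by rw [mul_right_comm D Y]; gcongr; exacts [mul_nonneg hD0 (hR j), hyb _])
  obtain ⟨hsummable, htsum⟩ :=
    summable_and_tsum_le_of_le_sub_succ (fun _ => norm_nonneg _) hterm fun j => mul_nonneg hK (hR j)
  refine ⟨hsummable, ?_⟩
  calc ‖-∑' j, f j‖ ≤ ∑' j, ‖f j‖ := (norm_neg _).trans_le (norm_tsum_le_tsum_norm hsummable)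
    _ ≤ K * R 0 := htsum
    _ ≤ K := mul_le_of_le_one_right hK <| Real.rpow_le_one_of_one_le_of_nonpos
      ((one_le_div (hpos _)).2 (hmono (by omega)).le) (by linarith)

/-- Bound on the unstable Green-function sum: the series
x_n^{(u)} = −Σ_{j≥1} φ_{ℓ+n+j}⁻¹ Φ(−j,ℓ+n+j) Q_{ℓ+n+j} y_{n+j} converges absolutely
and ‖x_n^{(u)}‖ ≤ D Y η^{λ+1} / λ. -/
theorem stmt17 {X : Type*} [NormedAddCommGroup X] [NormedSpace ℝ X] [CompleteSpace X]
    (μ : ℕ → ℝ) (η : ℝ)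
    (hpos : ∀ n, 0 < μ n)
    (hmono : StrictMono μ)
    (htend : Filter.Tendsto μ Filter.atTop Filter.atTop)
    (hη : 1 ≤ η) (hgrow : ∀ n, μ (n + 1) ≤ η * μ n)
    (P : ℕ → X →L[ℝ] X) (Ψ : ℕ → ℕ → X →L[ℝ] X)
    (D lam : ℝ) (hD : 1 ≤ D) (hlam : 0 < lam)
    (hunstable : ∀ j m (w : X), j ≤ m →
      ‖Ψ j m (((1 : X →L[ℝ] X) - P m) w)‖ ≤ D * (μ m / μ (m - j)) ^ (-lam) * ‖w‖)
    (ℓ n : ℕ) (y : ℕ → X) (Y : ℝ) (hyb : ∀ k, ‖y k‖ ≤ Y)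
    (f : ℕ → X)
    (hf : ∀ j, f j = ((μ (ℓ + n + j + 2) - μ (ℓ + n + j + 1)) / μ (ℓ + n + j + 1)) •
      Ψ (j + 1) (ℓ + n + j + 1)
        (((1 : X →L[ℝ] X) - P (ℓ + n + j + 1)) (y (n + j + 1)))) :
    Summable (fun j : ℕ => ‖f j‖) ∧ ‖-∑' j : ℕ, f j‖ ≤ D * Y * η ^ (lam + 1) / lam :=
  stmt17_general μ η hpos hmono hη hgrow P Ψ D lam hD hlam hunstable ℓ n y Y hyb f hf
end

section
/- Under the deterministic μ-dichotomy hypotheses, with x_n := x_n^{(s)} + x_n^{(u)} defined by the stable and unstable Green-function sums as above, the sequence (x_n) satisfies x_{n+1} = A_{ℓ+n} x_n + φ_{ℓ+n+1}^{−1} y_{n+1} for all n ∈ ℤ⁺, where A_{ℓ+n} = Φ(1, ℓ+n). -/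
/-! The stable sum gains one new term per step, and the cocycle property moves every old term
forward by `A`. In the unstable sum, `A` turns the `(j+1)`-st backward step into the `j`-th, so
`A` maps the unstable sum at `n` to the one at `n + 1` plus its leading `j = 0` term. The two
new terms are the `P`- and `(1 - P)`-components of the same vector, and they add up to it. -/

theorem cocycle_sum_range_succ {R M : Type*} [Semiring R] [AddCommMonoid M] [Module R M]
    [TopologicalSpace M] (A : ℕ → M →L[R] M) (Φ : ℕ → ℕ → M →L[R] M)
    (hΦ0 : ∀ m, Φ 0 m = 1) (hΦs : ∀ n m, Φ (n + 1) m = (A (m + n)).comp (Φ n m))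
    (ℓ : ℕ) (c : ℕ → R) (v : ℕ → M) (n : ℕ) :
    ∑ k ∈ Finset.range (n + 2), c k • Φ (n + 1 - k) (ℓ + k) (v k) =
      A (ℓ + n) (∑ k ∈ Finset.range (n + 1), c k • Φ (n - k) (ℓ + k) (v k)) +
        c (n + 1) • v (n + 1) := by
  rw [Finset.sum_range_succ, map_sum, Nat.sub_self, hΦ0, one_apply_eq_self]
  congr 1
  refine Finset.sum_congr rfl fun k hk => ?_
  have hkn : k ≤ n := Nat.lt_succ_iff.mp (Finset.mem_range.mp hk)
  rw [Nat.sub_add_comm hkn, hΦs, map_smul, Nat.add_assoc, Nat.add_sub_cancel' hkn,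
    ContinuousLinearMap.comp_apply]

theorem neg_tsum_eq_apply_neg_tsum_add {R M N : Type*} [Semiring R]
    [AddCommGroup M] [Module R M] [TopologicalSpace M]
    [AddCommGroup N] [Module R N] [TopologicalSpace N] [IsTopologicalAddGroup N] [T2Space N]
    (T : M →L[R] N) {f : ℕ → M} {g f' : ℕ → N} (hf : Summable f)
    (hTf : ∀ j, T (f j) = g j) (hg : ∀ j, g (j + 1) = f' j) :
    -∑' j, f' j = T (-∑' j, f j) + g 0 := by
  have hgs : Summable g := (hf.mapL T).congr hTf
  rw [map_neg, T.map_tsum hf, tsum_congr hTf, hgs.tsum_eq_zero_add, tsum_congr hg]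
  abel

theorem stmt18_general {X : Type*} [NormedAddCommGroup X] [NormedSpace ℝ X]
    (μ : ℕ → ℝ)
    (A : ℕ → X →L[ℝ] X) (Φ : ℕ → ℕ → X →L[ℝ] X)
    (hΦ0 : ∀ m, Φ 0 m = 1) (hΦs : ∀ n m, Φ (n + 1) m = (A (m + n)).comp (Φ n m))
    (P : ℕ → X →L[ℝ] X)
    (Ψ : ℕ → ℕ → X →L[ℝ] X) (hΨ0 : ∀ m, Ψ 0 m = 1)
    (hAΨ : ∀ j m, (A m).comp ((Ψ (j + 1) (m + j + 1)).comp
        ((1 : X →L[ℝ] X) - P (m + j + 1))) =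
      (Ψ j (m + j + 1)).comp ((1 : X →L[ℝ] X) - P (m + j + 1)))
    (ℓ : ℕ) (y : ℕ → X)
    (xs xu x : ℕ → X)
    (hxs : ∀ n, xs n = ∑ k ∈ Finset.range (n + 1),
      ((μ (ℓ + k + 1) - μ (ℓ + k)) / μ (ℓ + k)) • Φ (n - k) (ℓ + k) (P (ℓ + k) (y k)))
    (hsum : ∀ n, Summable (fun j : ℕ =>
      ((μ (ℓ + n + j + 2) - μ (ℓ + n + j + 1)) / μ (ℓ + n + j + 1)) •
        Ψ (j + 1) (ℓ + n + j + 1)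
          (((1 : X →L[ℝ] X) - P (ℓ + n + j + 1)) (y (n + j + 1)))))
    (hxu : ∀ n, xu n = -∑' j : ℕ,
      ((μ (ℓ + n + j + 2) - μ (ℓ + n + j + 1)) / μ (ℓ + n + j + 1)) •
        Ψ (j + 1) (ℓ + n + j + 1)
          (((1 : X →L[ℝ] X) - P (ℓ + n + j + 1)) (y (n + j + 1))))
    (hx : ∀ n, x n = xs n + xu n) :
    ∀ n, x (n + 1) = A (ℓ + n) (x n) +
      ((μ (ℓ + n + 2) - μ (ℓ + n + 1)) / μ (ℓ + n + 1)) • y (n + 1) := by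
  intro n
  set c : ℕ → ℝ := fun m => (μ (m + 1) - μ m) / μ m
  set Q : ℕ → X →L[ℝ] X := fun m => 1 - P m
  have hstable :
      xs (n + 1) = A (ℓ + n) (xs n) + c (ℓ + n + 1) • P (ℓ + n + 1) (y (n + 1)) := by
    rw [hxs, hxs]
    exact cocycle_sum_range_succ A Φ hΦ0 hΦs ℓ (fun k => c (ℓ + k))
      (fun k => P (ℓ + k) (y k)) n
  have hunstable :
      xu (n + 1) = A (ℓ + n) (xu n) + c (ℓ + n + 1) • Q (ℓ + n + 1) (y (n + 1)) := by
    set g : ℕ → X := fun j =>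
      c (ℓ + n + j + 1) • Ψ j (ℓ + n + j + 1) (Q (ℓ + n + j + 1) (y (n + j + 1)))
    have hA : ∀ j, A (ℓ + n) (c (ℓ + n + j + 1) •
        Ψ (j + 1) (ℓ + n + j + 1) (Q (ℓ + n + j + 1) (y (n + j + 1)))) = g j := fun j => by
      rw [map_smul]
      exact congrArg (c (ℓ + n + j + 1) • ·)
        (DFunLike.congr_fun (hAΨ j (ℓ + n)) (y (n + j + 1)))
    have hshift : ∀ j, g (j + 1) = c (ℓ + (n + 1) + j + 1) •
        Ψ (j + 1) (ℓ + (n + 1) + j + 1) (Q (ℓ + (n + 1) + j + 1) (y (n + 1 + j + 1))) :=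
      fun j => by
        simp only [g, show ℓ + n + (j + 1) = ℓ + (n + 1) + j by omega,
          show n + (j + 1) = n + 1 + j by omega]
    rw [hxu, hxu]
    refine (neg_tsum_eq_apply_neg_tsum_add (A (ℓ + n)) (hsum n) hA hshift).trans ?_
    simp only [g, add_zero, hΨ0, one_apply_eq_self]
  rw [hx, hx, hstable, hunstable, map_add, add_add_add_comm, ← smul_add]
  simp only [Q, sub_apply, one_apply_eq_self, add_sub_cancel]
  rfl

/-- The Green-function solution x_n = x_n^{(s)} + x_n^{(u)} satisfies the inhomogeneous
difference equation x_{n+1} = A_{ℓ+n} x_n + φ_{ℓ+n+1}⁻¹ y_{n+1}. -/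
theorem stmt18 {X : Type*} [NormedAddCommGroup X] [NormedSpace ℝ X] [CompleteSpace X]
    (μ : ℕ → ℝ) (η : ℝ)
    (hpos : ∀ n, 0 < μ n)
    (hmono : StrictMono μ)
    (htend : Filter.Tendsto μ Filter.atTop Filter.atTop)
    (hη : 1 ≤ η) (hgrow : ∀ n, μ (n + 1) ≤ η * μ n)
    (A : ℕ → X →L[ℝ] X) (Φ : ℕ → ℕ → X →L[ℝ] X)
    (hΦ0 : ∀ m, Φ 0 m = 1) (hΦs : ∀ n m, Φ (n + 1) m = (A (m + n)).comp (Φ n m))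
    (P : ℕ → X →L[ℝ] X)
    (Ψ : ℕ → ℕ → X →L[ℝ] X) (hΨ0 : ∀ m, Ψ 0 m = 1)
    (hAΨ : ∀ j m, (A m).comp ((Ψ (j + 1) (m + j + 1)).comp
        ((1 : X →L[ℝ] X) - P (m + j + 1))) =
      (Ψ j (m + j + 1)).comp ((1 : X →L[ℝ] X) - P (m + j + 1)))
    (ℓ : ℕ) (y : ℕ → X) (hy0 : y 0 = 0)
    (xs xu x : ℕ → X)
    (hxs : ∀ n, xs n = ∑ k ∈ Finset.range (n + 1),
      ((μ (ℓ + k + 1) - μ (ℓ + k)) / μ (ℓ + k)) • Φ (n - k) (ℓ + k) (P (ℓ + k) (y k)))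
    (hsum : ∀ n, Summable (fun j : ℕ =>
      ((μ (ℓ + n + j + 2) - μ (ℓ + n + j + 1)) / μ (ℓ + n + j + 1)) •
        Ψ (j + 1) (ℓ + n + j + 1)
          (((1 : X →L[ℝ] X) - P (ℓ + n + j + 1)) (y (n + j + 1)))))
    (hxu : ∀ n, xu n = -∑' j : ℕ,
      ((μ (ℓ + n + j + 2) - μ (ℓ + n + j + 1)) / μ (ℓ + n + j + 1)) •
        Ψ (j + 1) (ℓ + n + j + 1)
          (((1 : X →L[ℝ] X) - P (ℓ + n + j + 1)) (y (n + j + 1))))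
    (hx : ∀ n, x n = xs n + xu n) :
    ∀ n, x (n + 1) = A (ℓ + n) (x n) +
      ((μ (ℓ + n + 2) - μ (ℓ + n + 1)) / μ (ℓ + n + 1)) • y (n + 1) :=
  stmt18_general μ A Φ hΦ0 hΦs P Ψ hΨ0 hAΨ ℓ y xs xu x hxs hsum hxu hx
end

section
/- Let X be a Banach space, μ and ν growth rates with ν_n ≥ 1, and suppose a deterministic cocycle Φ(n,ℓ) with projections P_ℓ admits a strong nonuniform (μ,ν)-dichotomy: ‖Φ(n,ℓ)P_ℓ‖ ≤ D(μ_{ℓ+n}/μ_ℓ)^{−λ} ν_ℓ^{ε}, ‖Φ(−n,ℓ)Q_ℓ‖ ≤ D(μ_ℓ/μ_{ℓ−n})^{−λ} ν_ℓ^{ε} for 0 ≤ n ≤ ℓ, and ‖Φ(n,ℓ)Q_ℓ‖ ≤ K(μ_{ℓ+n}/μ_ℓ)^{b} ν_ℓ^{γ} with b ≥ λ. Define ‖v‖_ℓ := sup_{n≥0} ‖Φ(n,ℓ)P_ℓ v‖ (μ_{ℓ+n}/μ_ℓ)^{λ} + sup_{0≤n≤ℓ} ‖Φ(−n,ℓ)Q_ℓ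 v‖ (μ_ℓ/μ_{ℓ−n})^{λ} + sup_{n≥1} ‖Φ(n,ℓ)Q_ℓ v‖ (μ_{ℓ+n}/μ_ℓ)^{−b}. Then ‖v‖ ≤ ‖v‖_ℓ ≤ (2D + K) ν_ℓ^{max(ε,γ)} ‖v‖ for all ℓ and v ∈ X. -/
/-- Equivalence between the original norm and the adapted norm built from a strong
nonuniform (μ,ν)-dichotomy: ‖v‖ ≤ ‖v‖_ℓ ≤ (2D + K) ν_ℓ^{max(ε,γ)} ‖v‖. -/
theorem stmt19 {X : Type*} [NormedAddCommGroup X] [NormedSpace ℝ X] [CompleteSpace X]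
    (μ ν : ℕ → ℝ) (η : ℝ)
    (hpos : ∀ n, 0 < μ n)
    (hmono : StrictMono μ)
    (htend : Filter.Tendsto μ Filter.atTop Filter.atTop)
    (hη : 1 ≤ η) (hgrow : ∀ n, μ (n + 1) ≤ η * μ n)
    (hνmono : StrictMono ν) (hνtend : Filter.Tendsto ν Filter.atTop Filter.atTop)
    (hν1 : ∀ n, 1 ≤ ν n)
    (D K : ℝ) (hD : 1 ≤ D) (hK : 1 ≤ K)
    (lam eps b gam : ℝ) (hlam : 0 < lam) (heps : 0 < eps) (hb : lam ≤ b) (hgam : 0 < gam)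
    (Φ Ψ : ℕ → ℕ → X →L[ℝ] X) (P : ℕ → X →L[ℝ] X)
    (hΦ0 : ∀ ℓ, Φ 0 ℓ = 1) (hΨ0 : ∀ ℓ, Ψ 0 ℓ = 1)
    (hs : ∀ n ℓ (v : X),
      ‖Φ n ℓ (P ℓ v)‖ ≤ D * (μ (ℓ + n) / μ ℓ) ^ (-lam) * ν ℓ ^ eps * ‖v‖)
    (hu : ∀ n ℓ (v : X), n ≤ ℓ →
      ‖Ψ n ℓ (((1 : X →L[ℝ] X) - P ℓ) v)‖ ≤ D * (μ ℓ / μ (ℓ - n)) ^ (-lam) * ν ℓ ^ eps * ‖v‖)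
    (hg : ∀ n ℓ (v : X),
      ‖Φ n ℓ (((1 : X →L[ℝ] X) - P ℓ) v)‖ ≤ K * (μ (ℓ + n) / μ ℓ) ^ b * ν ℓ ^ gam * ‖v‖)
    (N : ℕ → X → ℝ)
    (hN : ∀ ℓ v, N ℓ v =
      (⨆ n : ℕ, ‖Φ n ℓ (P ℓ v)‖ * (μ (ℓ + n) / μ ℓ) ^ lam) +
      ((⨆ n : Fin (ℓ + 1),
          ‖Ψ (n : ℕ) ℓ (((1 : X →L[ℝ] X) - P ℓ) v)‖ * (μ ℓ / μ (ℓ - (n : ℕ))) ^ lam) +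
        (⨆ n : ℕ, ‖Φ (n + 1) ℓ (((1 : X →L[ℝ] X) - P ℓ) v)‖ * (μ (ℓ + n + 1) / μ ℓ) ^ (-b)))) :
    ∀ ℓ (v : X), ‖v‖ ≤ N ℓ v ∧ N ℓ v ≤ (2 * D + K) * ν ℓ ^ max eps gam * ‖v‖ := by
  intro ℓ v
  have hν : (1:ℝ) ≤ ν ℓ := hν1 ℓ
  have hνpos : 0 < ν ℓ := lt_of_lt_of_le one_pos hν
  have hνe : ν ℓ ^ eps ≤ ν ℓ ^ max eps gam :=
    Real.rpow_le_rpow_of_exponent_le hν (le_max_left _ _)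
  have hνg : ν ℓ ^ gam ≤ ν ℓ ^ max eps gam :=
    Real.rpow_le_rpow_of_exponent_le hν (le_max_right _ _)
  have hvnn : (0:ℝ) ≤ ‖v‖ := norm_nonneg v
  have hr : ∀ n : ℕ, (0:ℝ) < μ (ℓ + n) / μ ℓ := fun n => div_pos (hpos _) (hpos _)
  have hr2 : ∀ n : ℕ, (0:ℝ) < μ ℓ / μ (ℓ - n) := fun n => div_pos (hpos _) (hpos _)
  -- pointwise bounds
  have h1 : ∀ n : ℕ, ‖Φ n ℓ (P ℓ v)‖ * (μ (ℓ + n) / μ ℓ) ^ lam ≤ D * (ν ℓ ^ eps * ‖v‖) := by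
    intro n
    have := mul_le_mul_of_nonneg_right (hs n ℓ v) (Real.rpow_nonneg (hr n).le lam)
    calc ‖Φ n ℓ (P ℓ v)‖ * (μ (ℓ + n) / μ ℓ) ^ lam
        ≤ D * (μ (ℓ + n) / μ ℓ) ^ (-lam) * ν ℓ ^ eps * ‖v‖ * (μ (ℓ + n) / μ ℓ) ^ lam := this
      _ = D * (ν ℓ ^ eps * ‖v‖) * ((μ (ℓ + n) / μ ℓ) ^ (-lam) * (μ (ℓ + n) / μ ℓ) ^ lam) := by
          ring
      _ = D * (ν ℓ ^ eps * ‖v‖) := by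
          rw [← Real.rpow_add (hr n)]; simp
  have h2 : ∀ n : Fin (ℓ + 1),
      ‖Ψ (n : ℕ) ℓ (((1 : X →L[ℝ] X) - P ℓ) v)‖ * (μ ℓ / μ (ℓ - (n : ℕ))) ^ lam
        ≤ D * (ν ℓ ^ eps * ‖v‖) := by
    intro n
    have hnℓ : (n : ℕ) ≤ ℓ := Nat.lt_succ_iff.mp n.isLt
    have := mul_le_mul_of_nonneg_right (hu n ℓ v hnℓ) (Real.rpow_nonneg (hr2 n).le lam)
    calc ‖Ψ (n : ℕ) ℓ (((1 : X →L[ℝ] X) - P ℓ) v)‖ * (μ ℓ / μ (ℓ - (n : ℕ))) ^ lam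
        ≤ D * (μ ℓ / μ (ℓ - (n:ℕ))) ^ (-lam) * ν ℓ ^ eps * ‖v‖ * (μ ℓ / μ (ℓ - (n:ℕ))) ^ lam :=
          this
      _ = D * (ν ℓ ^ eps * ‖v‖) * ((μ ℓ / μ (ℓ - (n:ℕ))) ^ (-lam) * (μ ℓ / μ (ℓ - (n:ℕ))) ^ lam) := by
          ring
      _ = D * (ν ℓ ^ eps * ‖v‖) := by
          rw [← Real.rpow_add (hr2 n)]; simp
  have h3 : ∀ n : ℕ,
      ‖Φ (n + 1) ℓ (((1 : X →L[ℝ] X) - P ℓ) v)‖ * (μ (ℓ + n + 1) / μ ℓ) ^ (-b)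
        ≤ K * (ν ℓ ^ gam * ‖v‖) := by
    intro n
    have hb' := hg (n + 1) ℓ v
    have hadd : ℓ + (n + 1) = ℓ + n + 1 := by omega
    rw [hadd] at hb'
    have := mul_le_mul_of_nonneg_right hb' (Real.rpow_nonneg (div_pos (hpos (ℓ + n + 1)) (hpos ℓ)).le (-b))
    calc ‖Φ (n + 1) ℓ (((1 : X →L[ℝ] X) - P ℓ) v)‖ * (μ (ℓ + n + 1) / μ ℓ) ^ (-b)
        ≤ K * (μ (ℓ + n + 1) / μ ℓ) ^ b * ν ℓ ^ gam * ‖v‖ * (μ (ℓ + n + 1) / μ ℓ) ^ (-b) := this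
      _ = K * (ν ℓ ^ gam * ‖v‖) * ((μ (ℓ + n + 1) / μ ℓ) ^ b * (μ (ℓ + n + 1) / μ ℓ) ^ (-b)) := by
          ring
      _ = K * (ν ℓ ^ gam * ‖v‖) := by
          rw [← Real.rpow_add (div_pos (hpos (ℓ + n + 1)) (hpos ℓ))]; simp
  have bdd1 : BddAbove (Set.range fun n : ℕ => ‖Φ n ℓ (P ℓ v)‖ * (μ (ℓ + n) / μ ℓ) ^ lam) :=
    ⟨_, Set.forall_mem_range.mpr h1⟩
  have bdd3 : BddAbove (Set.range fun n : ℕ =>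
      ‖Φ (n + 1) ℓ (((1 : X →L[ℝ] X) - P ℓ) v)‖ * (μ (ℓ + n + 1) / μ ℓ) ^ (-b)) :=
    ⟨_, Set.forall_mem_range.mpr h3⟩
  constructor
  · -- lower bound
    have hPv : ‖P ℓ v‖ ≤ ⨆ n : ℕ, ‖Φ n ℓ (P ℓ v)‖ * (μ (ℓ + n) / μ ℓ) ^ lam := by
      have := le_ciSup bdd1 0
      simpa [hΦ0, div_self (hpos ℓ).ne', Real.one_rpow] using this
    have hQv : ‖((1 : X →L[ℝ] X) - P ℓ) v‖ ≤
        ⨆ n : Fin (ℓ + 1),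
          ‖Ψ (n : ℕ) ℓ (((1 : X →L[ℝ] X) - P ℓ) v)‖ * (μ ℓ / μ (ℓ - (n : ℕ))) ^ lam := by
      have := le_ciSup (f := fun n : Fin (ℓ + 1) =>
          ‖Ψ (n : ℕ) ℓ (((1 : X →L[ℝ] X) - P ℓ) v)‖ * (μ ℓ / μ (ℓ - (n : ℕ))) ^ lam)
        (Set.Finite.bddAbove (Set.finite_range _)) (0 : Fin (ℓ + 1))
      simpa [hΨ0, div_self (hpos ℓ).ne', Real.one_rpow] using this
    have h3nn : (0:ℝ) ≤ ⨆ n : ℕ,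
        ‖Φ (n + 1) ℓ (((1 : X →L[ℝ] X) - P ℓ) v)‖ * (μ (ℓ + n + 1) / μ ℓ) ^ (-b) := by
      refine le_trans ?_ (le_ciSup bdd3 0)
      exact mul_nonneg (norm_nonneg _) (Real.rpow_nonneg (div_pos (hpos _) (hpos _)).le _)
    have hsplit : ‖v‖ ≤ ‖P ℓ v‖ + ‖((1 : X →L[ℝ] X) - P ℓ) v‖ := by
      have : v = P ℓ v + ((1 : X →L[ℝ] X) - P ℓ) v := by
        simp [ContinuousLinearMap.sub_apply]
      calc ‖v‖ = ‖P ℓ v + ((1 : X →L[ℝ] X) - P ℓ) v‖ := by rw [← this]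
        _ ≤ _ := norm_add_le _ _
    rw [hN]
    linarith
  · -- upper bound
    rw [hN]
    have s1 : (⨆ n : ℕ, ‖Φ n ℓ (P ℓ v)‖ * (μ (ℓ + n) / μ ℓ) ^ lam) ≤ D * (ν ℓ ^ eps * ‖v‖) :=
      ciSup_le h1
    have s2 : (⨆ n : Fin (ℓ + 1),
        ‖Ψ (n : ℕ) ℓ (((1 : X →L[ℝ] X) - P ℓ) v)‖ * (μ ℓ / μ (ℓ - (n : ℕ))) ^ lam)
          ≤ D * (ν ℓ ^ eps * ‖v‖) :=
      ciSup_le h2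
    have s3 : (⨆ n : ℕ,
        ‖Φ (n + 1) ℓ (((1 : X →L[ℝ] X) - P ℓ) v)‖ * (μ (ℓ + n + 1) / μ ℓ) ^ (-b))
          ≤ K * (ν ℓ ^ gam * ‖v‖) :=
      ciSup_le h3
    have hDe : D * (ν ℓ ^ eps * ‖v‖) ≤ D * (ν ℓ ^ max eps gam * ‖v‖) := by
      have := mul_le_mul_of_nonneg_right hνe hvnn
      nlinarith
    have hKg : K * (ν ℓ ^ gam * ‖v‖) ≤ K * (ν ℓ ^ max eps gam * ‖v‖) := by
      have := mul_le_mul_of_nonneg_right hνg hvnn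
      nlinarith
    have : (2 * D + K) * ν ℓ ^ max eps gam * ‖v‖
        = D * (ν ℓ ^ max eps gam * ‖v‖) + (D * (ν ℓ ^ max eps gam * ‖v‖)
          + K * (ν ℓ ^ max eps gam * ‖v‖)) := by ring
    rw [this]
    gcongr <;> linarith
end
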